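/- Let t be a semibounded form on H with Lebesgue decomposition t = t_reg + t_sing. If u is any closable semibounded form on H with u ≤ t, then u ≤ t_reg. Consequently t_reg is the largest closable semibounded form below t. -/

import Mathlib

open Filter Topology
open scoped ComplexOrder

noncomputable section

variable {H K K' : Type*}

/-- Sesquilinear forms with domain `D`: linear in the first argument,
conjugate-linear in the second. -/
abbrev Form [NormedAddCommGroup H] [InnerProductSpace ℂ H] (D : Submodule ℂ H) : Type _ :=
  ↥D →ₗ[ℂ] (↥D →ₛₗ[starRingEnd ℂ] ℂ)

section Defs

variable [NormedAddCommGroup H] [InnerProductSpace ℂ H]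
  [NormedAddCommGroup K] [InnerProductSpace ℂ K]
  {D : Submodule ℂ H}

/-- `t[φ,φ] ≥ c‖φ‖²` on the domain (in the complex order, so diagonal values are real). -/
def BddBelowBy (t : Form D) (c : ℝ) : Prop :=
  ∀ φ : ↥D, (↑(c * ‖(φ : H)‖ ^ 2) : ℂ) ≤ t φ φ

/-- The set of Rayleigh quotients of the form `t`; its infimum is the lower bound `m(t)`. -/
def rayleighSet (t : Form D) : Set ℝ :=
  {r : ℝ | ∃ φ : ↥D, (φ : H) ≠ 0 ∧ r = (t φ φ).re / ‖(φ : H)‖ ^ 2}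

/-- `Q` is a representing map for the form `t - c` :
`t[φ,ψ] - c(φ,ψ) = (Qφ,Qψ)` (forms/inner products linear in the first entry). -/
def IsRepMap (t : Form D) (c : ℝ) (Q : ↥D →ₗ[ℂ] K) : Prop :=
  ∀ φ ψ : ↥D, t φ ψ - (c : ℂ) * (inner ℂ (ψ : H) (φ : H) : ℂ) = (inner ℂ (Q ψ) (Q φ) : ℂ)

/-- The graph of a partially defined operator. -/
def graphOf (Q : ↥D →ₗ[ℂ] K) : Set (H × K) :=
  Set.range fun φ : ↥D => ((φ : H), Q φ)

/-- `Q` is a closed operator. -/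
def OpClosed (Q : ↥D →ₗ[ℂ] K) : Prop := IsClosed (graphOf Q)

/-- `Q` is closable: the closure of its graph is again a graph. -/
def OpClosable (Q : ↥D →ₗ[ℂ] K) : Prop :=
  ∀ k : K, ((0 : H), k) ∈ closure (graphOf Q) → k = 0

/-- `Q` is singular: `ran Q ⊆ mul Q**`, equivalently every `(φ,0)` with `φ ∈ dom Q`
belongs to the closure of the graph. -/
def OpSingular (Q : ↥D →ₗ[ℂ] K) : Prop :=
  ∀ φ : ↥D, ((φ : H), (0 : K)) ∈ closure (graphOf Q)

/-- `φ n →_t x` : convergence in `H` together with `t[φ_n - φ_m] → 0`. -/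
def TConv (t : Form D) (φ : ℕ → ↥D) (x : H) : Prop :=
  Tendsto (fun n => (φ n : H)) atTop (nhds x) ∧
    Tendsto (fun p : ℕ × ℕ => t (φ p.1 - φ p.2) (φ p.1 - φ p.2)) (atTop ×ˢ atTop) (nhds 0)

/-- The form `t` is closable. -/
def FormClosable (t : Form D) : Prop :=
  ∀ φ : ℕ → ↥D, TConv t φ 0 → Tendsto (fun n => t (φ n) (φ n)) atTop (nhds 0)

/-- The form `t` is closed. -/
def FormClosed (t : Form D) : Prop :=
  ∀ (φ : ℕ → ↥D) (x : H), TConv t φ x →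
    ∃ hx : x ∈ D, Tendsto (fun n => t (φ n - ⟨x, hx⟩) (φ n - ⟨x, hx⟩)) atTop (nhds 0)

/-- The (nonnegative) form `t` is singular. -/
def FormSingular (t : Form D) : Prop :=
  ∀ ψ : ↥D, ∃ φ : ℕ → ↥D,
    Tendsto (fun n => (φ n : H)) atTop (nhds (ψ : H)) ∧
      Tendsto (fun n => t (φ n) (φ n)) atTop (nhds 0)

end Defs

section Defs2

variable [NormedAddCommGroup H] [InnerProductSpace ℂ H]

/-- Order on forms: `t₁ ≤ t₂` iff `dom t₂ ⊆ dom t₁` and `t₁[φ] ≤ t₂[φ]` on `dom t₂`. -/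
def FormLE {D₁ D₂ : Submodule ℂ H} (t₁ : Form D₁) (t₂ : Form D₂) : Prop :=
  ∃ h : D₂ ≤ D₁, ∀ φ : ↥D₂, t₁ ⟨(φ : H), h φ.2⟩ ⟨(φ : H), h φ.2⟩ ≤ t₂ φ φ

/-- `s` is an extension of the form `t` (`t ⊂ s`). -/
def FormExtends {D₁ D₂ : Submodule ℂ H} (s : Form D₂) (t : Form D₁) : Prop :=
  ∃ h : D₁ ≤ D₂, ∀ φ ψ : ↥D₁, s ⟨(φ : H), h φ.2⟩ ⟨(ψ : H), h ψ.2⟩ = t φ ψ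

/-- `r` is the regular part of `s` : a closable semibounded form below `s`
which dominates every closable semibounded form below `s`. -/
def IsRegularPart {D : Submodule ℂ H} (s r : Form D) : Prop :=
  FormClosable r ∧ (∃ c, BddBelowBy r c) ∧ FormLE r s ∧
    ∀ (Du : Submodule ℂ H) (u : Form Du), FormClosable u → (∃ cu, BddBelowBy u cu) →
      FormLE u s → FormLE u r

end Defs2

section Rel

variable [NormedAddCommGroup H] [InnerProductSpace ℂ H]
  [NormedAddCommGroup K] [InnerProductSpace ℂ K] {D : Submodule ℂ H}

/-- A symmetric relation in `H`: `⟨φ',ψ⟩ = ⟨φ,ψ'⟩` for all members. -/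
def IsSymmRel (R : Set (H × H)) : Prop :=
  ∀ p ∈ R, ∀ q ∈ R, (inner ℂ q.1 p.2 : ℂ) = (inner ℂ q.2 p.1 : ℂ)

/-- The adjoint of a linear relation in `H`. -/
def adjRelSet (R : Set (H × H)) : Set (H × H) :=
  {q | ∀ p ∈ R, (inner ℂ q.1 p.2 : ℂ) = (inner ℂ q.2 p.1 : ℂ)}

/-- The relation `Q*Q + c` in `H`. -/
def StRel (Q : ↥D →ₗ[ℂ] K) (c : ℝ) : Set (H × H) :=
  {p | ∃ h : p.1 ∈ D, ∀ ψ : ↥D,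
    (inner ℂ (Q ψ) (Q ⟨p.1, h⟩) : ℂ) = (inner ℂ (ψ : H) (p.2 - (c : ℂ) • p.1) : ℂ)}

/-- The relation `Q*Q** + c` in `H`, where `Q**` is the closure of the graph of `Q`. -/
def ARel (Q : ↥D →ₗ[ℂ] K) (c : ℝ) : Set (H × H) :=
  {p | ∃ g : K, (p.1, g) ∈ closure (graphOf Q) ∧
    ∀ ψ : ↥D, (inner ℂ (Q ψ) g : ℂ) = (inner ℂ (ψ : H) (p.2 - (c : ℂ) • p.1) : ℂ)}

end Rel

/-! With `R = (1 - P₀) Q`, the form `t_reg` is represented by `R` as `t` is by `Q`, and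
`‖R φ‖ ≤ ‖Q φ‖` gives `t_reg ≤ t`. The operator `R` is closable because `P₀` fixes the multivalued
part of `Q**` but annihilates the range of `R`; hence `t_reg` is closable. For maximality, given
`φ ∈ dom t` choose `χₙ → 0` with `Q χₙ → P₀ Q φ`. Then `t[φ - χₙ] → t_reg[φ]`, while `χₙ` is
`t`-Cauchy, hence `u`-Cauchy (as `c_u ‖·‖² ≤ u ≤ t`), so `u[χₙ] → 0` by closability of `u`, and
Cauchy–Schwarz for the nonnegative form `u - c_u` gives `u[φ - χₙ] → u[φ]`. -/

open ComplexConjugate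

section NonnegForm

variable {V : Type*} [AddCommGroup V] [Module ℂ V] (s : V →ₗ[ℂ] V →ₗ⋆[ℂ] ℂ)

lemma LinearMap.conj_apply_of_im_apply_self_eq_zero (hs : ∀ x, (s x x).im = 0) (x y : V) :
    conj (s x y) = s y x := by
  -- polarization with `x + y` and `x + I • y`
  have h₁ := hs (x + y)
  have h₂ := hs (x + Complex.I • y)
  simp only [map_add, map_smul, map_smulₛₗ, LinearMap.add_apply, LinearMap.smul_apply,
    smul_eq_mul, Complex.conj_I, Complex.add_im, Complex.mul_im, Complex.neg_re, Complex.neg_im,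
    Complex.I_re, Complex.I_im, Complex.add_re, Complex.mul_re, hs x, hs y] at h₁ h₂
  apply Complex.ext <;> simp only [Complex.conj_re, Complex.conj_im] <;> linarith

lemma LinearMap.norm_apply_sq_le_of_nonneg (hs : ∀ x, 0 ≤ s x x) (x y : V) :
    ‖s x y‖ ^ 2 ≤ (s x x).re * (s y y).re := by
  have him : ∀ x, (s x x).im = 0 := fun x => ((Complex.nonneg_iff.mp (hs x)).2).symm
  -- `(x, y) ↦ s y x` is a semi-inner product on `V`, so Cauchy–Schwarz applies to it
  let core : PreInnerProductSpace.Core ℂ V :=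
    { inner := fun x y => s y x
      conj_inner_symm := s.conj_apply_of_im_apply_self_eq_zero him
      re_inner_nonneg := fun x => (Complex.nonneg_iff.mp (hs x)).1
      add_left := fun x y z => map_add (s z) x y
      smul_left := fun x y r => (s y).map_smulₛₗ r x }
  have h := InnerProductSpace.Core.inner_mul_inner_self_le (c := core) y x
  rw [sq]
  calc ‖s x y‖ * ‖s x y‖ = ‖s x y‖ * ‖s y x‖ := by
        rw [← s.conj_apply_of_im_apply_self_eq_zero him x y, Complex.norm_conj]
    _ ≤ (s y y).re * (s x x).re := h
    _ = _ := mul_comm _ _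

lemma LinearMap.tendsto_apply_sub_of_nonneg (hs : ∀ x, 0 ≤ s x x) {ι : Type*} {l : Filter ι}
    {χ : ι → V} (hχ : Tendsto (fun i => s (χ i) (χ i)) l (𝓝 0)) (x : V) :
    Tendsto (fun i => s (x - χ i) (x - χ i)) l (𝓝 (s x x)) := by
  have hre : Tendsto (fun i => (s (χ i) (χ i)).re) l (𝓝 0) := by
    simpa [Function.comp_def] using (Complex.continuous_re.tendsto 0).comp hχ
  have of_sq_le : ∀ f : ι → ℂ, (∀ i, ‖f i‖ ^ 2 ≤ (s x x).re * (s (χ i) (χ i)).re) →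
      Tendsto f l (𝓝 0) := fun f hf =>
    squeeze_zero_norm (fun i => Real.le_sqrt_of_sq_le (hf i))
      (by simpa using (hre.const_mul _).sqrt)
  have hxχ := of_sq_le _ fun i => s.norm_apply_sq_le_of_nonneg hs x (χ i)
  have hχx := of_sq_le _ fun i =>
    (s.norm_apply_sq_le_of_nonneg hs (χ i) x).trans_eq (mul_comm _ _)
  have key := ((tendsto_const_nhds (x := s x x)).sub hxχ |>.sub hχx).add hχ
  simp only [sub_zero, add_zero] at key
  refine key.congr fun i => ?_
  simp only [map_sub, LinearMap.sub_apply]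
  ring

end NonnegForm

lemma Complex.tendsto_of_tendsto_of_tendsto_of_le_of_le {ι : Type*} {l : Filter ι}
    {f g h : ι → ℂ} {a : ℂ} (hf : Tendsto f l (𝓝 a)) (hh : Tendsto h l (𝓝 a))
    (hfg : ∀ i, f i ≤ g i) (hgh : ∀ i, g i ≤ h i) : Tendsto g l (𝓝 a) := by
  have : Tendsto (fun i => g i - f i) l (𝓝 0) :=
    squeeze_zero_norm
      (fun i => CStarAlgebra.norm_le_norm_of_nonneg_of_le (sub_nonneg.2 (hfg i))
        (sub_le_sub_right (hgh i) _))
      (by simpa using (hh.sub hf).norm)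
  simpa using this.add hf

section Operator

variable [NormedAddCommGroup H] [InnerProductSpace ℂ H] [NormedAddCommGroup K]
  [InnerProductSpace ℂ K] {D : Submodule ℂ H}

lemma LinearMap.IsSymmetric.norm_sub_apply_le {P : K →ₗ[ℂ] K} (hP : P.IsSymmetric)
    (hidem : ∀ k, P (P k) = P k) (k : K) : ‖k - P k‖ ≤ ‖k‖ := by
  have horth : (inner ℂ (k - P k) (P k) : ℂ) = 0 := by
    rw [← hP, map_sub, hidem, sub_self, inner_zero_left]
  have hpyth := norm_add_sq_eq_norm_sq_add_norm_sq_of_inner_eq_zero (k - P k) (P k) horth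
  rw [sub_add_cancel] at hpyth
  nlinarith [norm_nonneg (k - P k), norm_nonneg k, sq_nonneg ‖P k‖]

lemma closure_graphOf (Q : ↥D →ₗ[ℂ] K) :
    closure (graphOf Q) =
      ((LinearMap.range (D.subtype.prod Q)).topologicalClosure : Set (H × K)) := by
  rw [Submodule.topologicalClosure_coe, LinearMap.coe_range]
  rfl

lemma sub_mem_closure_graphOf {Q : ↥D →ₗ[ℂ] K} {p q : H × K} (hp : p ∈ closure (graphOf Q))
    (hq : q ∈ closure (graphOf Q)) : p - q ∈ closure (graphOf Q) := by
  rw [closure_graphOf] at *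
  exact sub_mem hp hq

lemma exists_seq_of_mem_closure_graphOf {Q : ↥D →ₗ[ℂ] K} {x : H} {k : K}
    (h : (x, k) ∈ closure (graphOf Q)) :
    ∃ χ : ℕ → ↥D, Tendsto (fun n => (χ n : H)) atTop (𝓝 x) ∧
      Tendsto (fun n => Q (χ n)) atTop (𝓝 k) := by
  obtain ⟨g, hg, hlim⟩ := mem_closure_iff_seq_limit.mp h
  choose χ hχ using hg
  obtain rfl : (fun n => ((χ n : H), Q (χ n))) = g := funext hχ
  exact ⟨χ, (Prod.tendsto_iff _ _).mp hlim⟩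

lemma opClosable_sub_comp (Q : ↥D →ₗ[ℂ] K) (P : K →L[ℂ] K)
    (hPmem : ∀ k : K, ((0 : H), P k) ∈ closure (graphOf Q))
    (hPfix : ∀ k : K, ((0 : H), k) ∈ closure (graphOf Q) → P k = k) :
    OpClosable (Q - (P : K →ₗ[ℂ] K) ∘ₗ Q) := by
  intro k hk
  have hidem : ∀ k, P (P k) = P k := fun k => hPfix _ (hPmem k)
  have hsub : graphOf (Q - (P : K →ₗ[ℂ] K) ∘ₗ Q) ⊆ closure (graphOf Q) := by
    rintro _ ⟨φ, rfl⟩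
    simpa using sub_mem_closure_graphOf (subset_closure ⟨φ, rfl⟩) (hPmem (Q φ))
  have hker : graphOf (Q - (P : K →ₗ[ℂ] K) ∘ₗ Q) ⊆ {p | P p.2 = 0} := by
    rintro _ ⟨φ, rfl⟩
    simp [hidem]
  have hfix : P k = k := hPfix k (closure_minimal hsub isClosed_closure hk)
  have hzero : P k = 0 :=
    closure_minimal hker (isClosed_eq (P.continuous.comp continuous_snd) continuous_const) hk
  rw [← hfix, hzero]

end Operator

section RepMap

variable [NormedAddCommGroup H] [InnerProductSpace ℂ H] [NormedAddCommGroup K]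
  [InnerProductSpace ℂ K] {D : Submodule ℂ H} {t : Form D} {c : ℝ} {Q : ↥D →ₗ[ℂ] K}

lemma IsRepMap.apply_self (hQ : IsRepMap t c Q) (φ : ↥D) :
    t φ φ = ((c * ‖(φ : H)‖ ^ 2 + ‖Q φ‖ ^ 2 : ℝ) : ℂ) := by
  have h := hQ φ φ
  rw [inner_self_eq_norm_sq_to_K, inner_self_eq_norm_sq_to_K] at h
  push_cast
  linear_combination h

lemma IsRepMap.tendsto_apply_self (hQ : IsRepMap t c Q) {ι : Type*} {l : Filter ι}
    {φ : ι → ↥D} {x : H} {k : K} (hφ : Tendsto (fun i => (φ i : H)) l (𝓝 x))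
    (hQφ : Tendsto (fun i => Q (φ i)) l (𝓝 k)) :
    Tendsto (fun i => t (φ i) (φ i)) l (𝓝 ((c * ‖x‖ ^ 2 + ‖k‖ ^ 2 : ℝ) : ℂ)) := by
  simp_rw [hQ.apply_self]
  exact (Complex.continuous_ofReal.tendsto _).comp
    (((hφ.norm.pow 2).const_mul c).add (hQφ.norm.pow 2))

lemma IsRepMap.tConv_zero (hQ : IsRepMap t c Q) {χ : ℕ → ↥D} {k : K}
    (hχ : Tendsto (fun n => (χ n : H)) atTop (𝓝 0))
    (hQχ : Tendsto (fun n => Q (χ n)) atTop (𝓝 k)) : TConv t χ 0 := by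
  refine ⟨hχ, ?_⟩
  have h := hQ.tendsto_apply_self (φ := fun p : ℕ × ℕ => χ p.1 - χ p.2)
    (by simpa using (hχ.comp tendsto_fst).sub (hχ.comp tendsto_snd))
    (by simpa using (hQχ.comp tendsto_fst).sub (hQχ.comp tendsto_snd))
  convert h using 2
  simp

lemma IsRepMap.formClosable [CompleteSpace K] (hQ : IsRepMap t c Q) (hQc : OpClosable Q) :
    FormClosable t := by
  rintro φ ⟨hφ, hcau⟩
  have hdiff : Tendsto (fun p : ℕ × ℕ => ((φ p.1 - φ p.2 : ↥D) : H)) (atTop ×ˢ atTop) (𝓝 0) :=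
    by simpa using (hφ.comp tendsto_fst).sub (hφ.comp tendsto_snd)
  have hQdiff :
      Tendsto (fun p : ℕ × ℕ => ‖Q (φ p.1) - Q (φ p.2)‖ ^ 2) (atTop ×ˢ atTop) (𝓝 0) := by
    have hre : Tendsto (fun p : ℕ × ℕ => (t (φ p.1 - φ p.2) (φ p.1 - φ p.2)).re)
        (atTop ×ˢ atTop) (𝓝 0) := by
      simpa [Function.comp_def] using (Complex.continuous_re.tendsto 0).comp hcau
    convert hre.sub ((hdiff.norm.pow 2).const_mul c) using 2 with p
    · rw [hQ.apply_self, Complex.ofReal_re, map_sub]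
      ring
    · simp
  have hcauQ : CauchySeq fun n => Q (φ n) := by
    rw [cauchySeq_iff_tendsto_dist_atTop_0, ← prod_atTop_atTop_eq]
    simpa [dist_eq_norm] using hQdiff.sqrt
  obtain ⟨k, hk⟩ := cauchySeq_tendsto_of_complete hcauQ
  obtain rfl : k = 0 :=
    hQc k (mem_closure_of_tendsto (hφ.prodMk_nhds hk) (.of_forall fun n => ⟨φ n, rfl⟩))
  simpa using hQ.tendsto_apply_self hφ hk

lemma IsRepMap.formLE {t' : Form D} {Q' : ↥D →ₗ[ℂ] K} (hQ : IsRepMap t c Q)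
    (hQ' : IsRepMap t' c Q') (hle : ∀ φ, ‖Q' φ‖ ≤ ‖Q φ‖) : FormLE t' t := by
  refine ⟨le_rfl, fun φ => ?_⟩
  change t' φ φ ≤ t φ φ
  rw [hQ.apply_self, hQ'.apply_self, Complex.real_le_real]
  gcongr
  exact hle φ

end RepMap

section Semibounded

variable [NormedAddCommGroup H] [InnerProductSpace ℂ H]

lemma FormClosable.tendsto_apply_sub {D : Submodule ℂ H} {u : Form D} (hu : FormClosable u)
    {cu : ℝ} (hcu : BddBelowBy u cu) {χ : ℕ → ↥D} (hχ : TConv u χ 0) (x : ↥D) :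
    Tendsto (fun n => u (x - χ n) (x - χ n)) atTop (𝓝 (u x x)) := by
  set s : Form D := u - (cu : ℂ) • (innerₛₗ ℂ).flip
  have hs_apply : ∀ y, s y y = u y y - ((cu * ‖(y : H)‖ ^ 2 : ℝ) : ℂ) := by
    intro y
    simp [s, inner_self_eq_norm_sq_to_K]
  have hs : ∀ y, 0 ≤ s y y := fun y => by rw [hs_apply, sub_nonneg]; exact hcu y
  have hnorm : ∀ {f : ℕ → ↥D} {a : H}, Tendsto (fun n => (f n : H)) atTop (𝓝 a) →
      Tendsto (fun n => ((cu * ‖(f n : H)‖ ^ 2 : ℝ) : ℂ)) atTop (𝓝 ((cu * ‖a‖ ^ 2 : ℝ) : ℂ)) :=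
    fun hf => (Complex.continuous_ofReal.tendsto _).comp ((hf.norm.pow 2).const_mul cu)
  have hsχ : Tendsto (fun n => s (χ n) (χ n)) atTop (𝓝 0) := by
    simpa [hs_apply] using (hu χ hχ).sub (hnorm hχ.1)
  have hsub : Tendsto (fun n => ((x - χ n : ↥D) : H)) atTop (𝓝 x) := by
    simpa using tendsto_const_nhds.sub hχ.1
  have key := (s.tendsto_apply_sub_of_nonneg hs hsχ x).add (hnorm hsub)
  simp only [hs_apply, sub_add_cancel] at key
  exact key

lemma TConv.of_le {D₁ D₂ : Submodule ℂ H} {u : Form D₁} {t : Form D₂} (hD : D₂ ≤ D₁)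
    (hle : ∀ φ : ↥D₂, u (Submodule.inclusion hD φ) (Submodule.inclusion hD φ) ≤ t φ φ)
    {cu : ℝ} (hcu : BddBelowBy u cu) {χ : ℕ → ↥D₂} (hχ : TConv t χ 0) :
    TConv u (fun n => Submodule.inclusion hD (χ n)) 0 := by
  refine ⟨hχ.1, ?_⟩
  have hdiff : Tendsto (fun p : ℕ × ℕ => (χ p.1 : H) - χ p.2) (atTop ×ˢ atTop) (𝓝 0) := by
    simpa using (hχ.1.comp tendsto_fst).sub (hχ.1.comp tendsto_snd)
  refine Complex.tendsto_of_tendsto_of_tendsto_of_le_of_le ?_ hχ.2 (fun p => hcu _)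
    (fun p => hle (χ p.1 - χ p.2))
  simpa [Function.comp_def] using
    (Complex.continuous_ofReal.tendsto _).comp ((hdiff.norm.pow 2).const_mul cu)

end Semibounded

theorem statement9_general [NormedAddCommGroup H] [InnerProductSpace ℂ H]
    [NormedAddCommGroup K] [InnerProductSpace ℂ K] [CompleteSpace K]
    {D : Submodule ℂ H} (t : Form D) (c : ℝ)
    (Q : ↥D →ₗ[ℂ] K) (hQ : IsRepMap t c Q)
    (P₀ : K →L[ℂ] K)
    (hPmem : ∀ k : K, ((0 : H), P₀ k) ∈ closure (graphOf Q))
    (hPfix : ∀ k : K, ((0 : H), k) ∈ closure (graphOf Q) → P₀ k = k)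
    (hPsa : ∀ k m : K, (inner ℂ (P₀ k) m : ℂ) = (inner ℂ k (P₀ m) : ℂ))
    (treg : Form D)
    (hreg : ∀ φ ψ : ↥D, treg φ ψ = (c : ℂ) * (inner ℂ (ψ : H) (φ : H) : ℂ) +
      (inner ℂ (Q ψ - P₀ (Q ψ)) (Q φ - P₀ (Q φ)) : ℂ)) :
    FormClosable treg ∧ FormLE treg t ∧
      ∀ (Du : Submodule ℂ H) (u : Form Du), FormClosable u → (∃ cu, BddBelowBy u cu) →
        FormLE u t → FormLE u treg := by
  have hR : IsRepMap treg c (Q - (P₀ : K →ₗ[ℂ] K) ∘ₗ Q) := fun φ ψ => by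
    simp [hreg]
  refine ⟨hR.formClosable (opClosable_sub_comp Q P₀ hPmem hPfix),
    hQ.formLE hR fun φ => LinearMap.IsSymmetric.norm_sub_apply_le hPsa
      (fun k => hPfix _ (hPmem k)) (Q φ), ?_⟩
  rintro Du u hu ⟨cu, hcu⟩ ⟨hD, hle⟩
  refine ⟨hD, fun φ => ?_⟩
  obtain ⟨χ, hχ, hQχ⟩ := exists_seq_of_mem_closure_graphOf (hPmem (Q φ))
  have hu_lim := hu.tendsto_apply_sub hcu ((hQ.tConv_zero hχ hQχ).of_le hD hle hcu)
    (Submodule.inclusion hD φ)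
  have ht_lim := hQ.tendsto_apply_self (φ := fun n => φ - χ n)
    (by simpa using tendsto_const_nhds.sub hχ) (by simpa using tendsto_const_nhds.sub hQχ)
  change _ ≤ treg φ φ
  rw [hR.apply_self]
  exact le_of_tendsto_of_tendsto' hu_lim ht_lim fun n => hle (φ - χ n)

/-- the regular part `t_reg` of the Lebesgue decomposition dominates every
closable semibounded form below `t`; hence it is the largest such form. -/
theorem statement9 [NormedAddCommGroup H] [InnerProductSpace ℂ H] [CompleteSpace H]
    [NormedAddCommGroup K] [InnerProductSpace ℂ K] [CompleteSpace K]
    {D : Submodule ℂ H} (t : Form D) (c : ℝ)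
    (hbdd : BddBelowBy t c) (Q : ↥D →ₗ[ℂ] K) (hQ : IsRepMap t c Q)
    (P₀ : K →L[ℂ] K)
    (hPmem : ∀ k : K, ((0 : H), P₀ k) ∈ closure (graphOf Q))
    (hPfix : ∀ k : K, ((0 : H), k) ∈ closure (graphOf Q) → P₀ k = k)
    (hPsa : ∀ k m : K, (inner ℂ (P₀ k) m : ℂ) = (inner ℂ k (P₀ m) : ℂ))
    (treg : Form D)
    (hreg : ∀ φ ψ : ↥D, treg φ ψ = (c : ℂ) * (inner ℂ (ψ : H) (φ : H) : ℂ) +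
      (inner ℂ (Q ψ - P₀ (Q ψ)) (Q φ - P₀ (Q φ)) : ℂ)) :
    FormClosable treg ∧ FormLE treg t ∧
      ∀ (Du : Submodule ℂ H) (u : Form Du), FormClosable u → (∃ cu, BddBelowBy u cu) →
        FormLE u t → FormLE u treg :=
  statement9_general t c Q hQ P₀ hPmem hPfix hPsa treg hreg
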